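/- Let A be the n×n integer matrix equal to diag(r·[[2,1],[1,2]], s·[[0,1],[1,0]], t·[[0,2],[2,0]], p·[2], m·[0]). Define V₀ = {v ∈ ℤⁿ : vᵀAw ≡ 0 mod 2 for all w ∈ ℤⁿ} and V₀₀₀ = {v ∈ V₀ : vᵀAw ≡ 0 mod 4 for all w ∈ ℤⁿ}, and let V̄₀ = V₀/2ℤⁿ and V̄₀₀₀ = (V₀₀₀ + 2ℤⁿ)/2ℤⁿ as 𝔽₂-vector spaces. Then dim V̄₀ = 2t + p + m and dim V̄₀₀₀ = m. -/
import Mathlib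


/-- Entry `(i,j)` of the block diagonal matrix
`diag(r·[[2,1],[1,2]], s·[[0,1],[1,0]], t·[[0,2],[2,0]], p·[2], m·[0])`
(the `m` trailing zero rows/columns are implicit: the entry is `0` there). -/
def nfEntry (r s t p : ℕ) (i j : ℕ) : ℤ :=
  if i < 2*r ∧ j < 2*r then (if i = j then 2 else if i / 2 = j / 2 then 1 else 0)
  else if 2*r ≤ i ∧ i < 2*r+2*s ∧ 2*r ≤ j ∧ j < 2*r+2*s then
    (if i ≠ j ∧ i / 2 = j / 2 then 1 else 0)
  else if 2*r+2*s ≤ i ∧ i < 2*r+2*s+2*t ∧ 2*r+2*s ≤ j ∧ j < 2*r+2*s+2*t then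
    (if i ≠ j ∧ i / 2 = j / 2 then 2 else 0)
  else if 2*r+2*s+2*t ≤ i ∧ i < 2*r+2*s+2*t+p ∧ i = j then 2
  else 0

namespace Stmt9

/-- The index paired with `i` inside a 2×2 block. -/
def partner (i : ℕ) : ℕ := if i % 2 = 0 then i + 1 else i - 1

lemma partner_partner (i : ℕ) : partner (partner i) = i := by
  unfold partner; split <;> split <;> omega

lemma partner_lt {i N : ℕ} (hN : N % 2 = 0) (h : i < N) : partner i < N := by
  unfold partner; split <;> omega

lemma partner_ge {i N : ℕ} (hN : N % 2 = 0) (h : N ≤ i) : N ≤ partner i := by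
  unfold partner; split <;> omega

lemma row1 (r s t p j i : ℕ) (hj : j < 2*r) :
    nfEntry r s t p j i = (if i = j then 2 else 0) + (if i = partner j then 1 else 0) := by
  unfold nfEntry partner
  split_ifs <;> first | rfl | omega

lemma row2 (r s t p j i : ℕ) (hj1 : 2*r ≤ j) (hj2 : j < 2*r+2*s) :
    nfEntry r s t p j i = (if i = partner j then 1 else 0) := by
  unfold nfEntry partner
  split_ifs <;> first | rfl | omega

lemma row3 (r s t p j i : ℕ) (hj1 : 2*r+2*s ≤ j) (hj2 : j < 2*r+2*s+2*t) :
    nfEntry r s t p j i = (if i = partner j then 2 else 0) := by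
  unfold nfEntry partner
  split_ifs <;> first | rfl | omega

lemma row4 (r s t p j i : ℕ) (hj1 : 2*r+2*s+2*t ≤ j) (hj2 : j < 2*r+2*s+2*t+p) :
    nfEntry r s t p j i = (if i = j then 2 else 0) := by
  unfold nfEntry
  split_ifs <;> first | rfl | omega

lemma row5 (r s t p j i : ℕ) (hj : 2*r+2*s+2*t+p ≤ j) :
    nfEntry r s t p j i = 0 := by
  unfold nfEntry
  split_ifs <;> first | rfl | omega

lemma nfEntry_symm (r s t p i j : ℕ) : nfEntry r s t p i j = nfEntry r s t p j i := by
  unfold nfEntry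
  split_ifs <;> first | rfl | omega

/-- mod 2, a row with index `< 2r+2s` has a single `1`, at the partner index. -/
lemma entry2 (r s t p i j : ℕ) (hi : i < 2*r+2*s) :
    ((nfEntry r s t p i j : ℤ) : ZMod 2) = if j = partner i then 1 else 0 := by
  have hne : partner i ≠ i := by unfold partner; split <;> omega
  rcases lt_or_ge i (2*r) with h | h
  · rw [row1 r s t p i j h]
    by_cases h1 : j = i
    · rw [if_pos h1, if_neg, if_neg] <;> first | decide | omega
    · rw [if_neg h1]
      by_cases h2 : j = partner i
      · rw [if_pos h2, if_pos h2]; decide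
      · rw [if_neg h2, if_neg h2]; decide
  · rw [row2 r s t p i j h hi]
    by_cases h2 : j = partner i
    · rw [if_pos h2, if_pos h2]; decide
    · rw [if_neg h2, if_neg h2]; decide

lemma entry2_zero (r s t p i j : ℕ) (hi : 2*r+2*s ≤ i) :
    ((nfEntry r s t p i j : ℤ) : ZMod 2) = 0 := by
  unfold nfEntry
  split_ifs <;> first | decide | omega

def coordZero (n N : ℕ) : Submodule (ZMod 2) (Fin n → ZMod 2) where
  carrier := {v | ∀ i : Fin n, (i : ℕ) < N → v i = 0}
  add_mem' := by intro a b ha hb i hi; simp [ha i hi, hb i hi]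
  zero_mem' := by intro i _; rfl
  smul_mem' := by intro c v hv i hi; simp [hv i hi]

lemma mem_coordZero {n N : ℕ} {v : Fin n → ZMod 2} :
    v ∈ coordZero n N ↔ ∀ i : Fin n, (i : ℕ) < N → v i = 0 := Iff.rfl

noncomputable def coordZeroEquiv (n N : ℕ) :
    (coordZero n N) ≃ₗ[ZMod 2] ({i : Fin n // ¬ (i : ℕ) < N} → ZMod 2) where
  toFun v := fun j => v.1 j.1
  map_add' := fun a b => rfl
  map_smul' := fun c a => rfl
  invFun f := ⟨fun i => if h : (i : ℕ) < N then 0 else f ⟨i, h⟩, fun i hi => dif_pos hi⟩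
  left_inv := by
    intro v
    ext i
    dsimp
    split
    · exact (v.2 i (by assumption)).symm
    · rfl
  right_inv := by
    intro f
    ext j
    dsimp
    rw [dif_neg j.2]

def notLtEquiv (n N : ℕ) (h : N ≤ n) : {i : Fin n // ¬ (i : ℕ) < N} ≃ Fin (n - N) where
  toFun j := ⟨(j.1 : ℕ) - N, by have := j.1.2; have := j.2; omega⟩
  invFun k := ⟨⟨(k : ℕ) + N, by have := k.2; omega⟩, by simp⟩
  left_inv := by intro j; ext; have := j.2; simp; omega
  right_inv := by intro k; ext; simp

lemma finrank_coordZero (n N : ℕ) (h : N ≤ n) :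
    Module.finrank (ZMod 2) (coordZero n N) = n - N := by
  rw [(coordZeroEquiv n N).finrank_eq, Module.finrank_pi,
    Fintype.card_congr (notLtEquiv n N h), Fintype.card_fin]

lemma sum_single_nat {n : ℕ} {R : Type*} [CommRing R] (u : Fin n → R) (a : Fin n) (c : R) :
    (∑ i : Fin n, u i * (if (i : ℕ) = (a : ℕ) then c else 0)) = u a * c := by
  have h : ∀ i : Fin n, u i * (if (i : ℕ) = (a : ℕ) then c else 0)
      = if i = a then u i * c else 0 := by
    intro i
    by_cases h : i = a
    · subst h; simp
    · rw [if_neg h, if_neg (fun hc => h (Fin.ext hc)), mul_zero]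
  rw [Finset.sum_congr rfl fun i _ => h i,
    Finset.sum_ite_eq' Finset.univ a (fun i => u i * c), if_pos (Finset.mem_univ a)]

lemma sum_two_nat {n : ℕ} (u : Fin n → ℤ) (a b : Fin n) (c d : ℤ) :
    (∑ i : Fin n, u i * ((if (i : ℕ) = (a : ℕ) then c else 0)
      + (if (i : ℕ) = (b : ℕ) then d else 0))) = u a * c + u b * d := by
  have : ∀ i : Fin n, u i * ((if (i : ℕ) = (a : ℕ) then c else 0)
      + (if (i : ℕ) = (b : ℕ) then d else 0))
      = u i * (if (i : ℕ) = (a : ℕ) then c else 0)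
      + u i * (if (i : ℕ) = (b : ℕ) then d else 0) := fun i => mul_add _ _ _
  rw [Finset.sum_congr rfl fun i _ => this i, Finset.sum_add_distrib,
    sum_single_nat, sum_single_nat]

end Stmt9

open Matrix Stmt9 in
/-- Lemma 2.7 (dimensions): for the normal form matrix A, the 𝔽₂-subspaces
V̄₀ = V₀/2V and V̄₀₀₀ = (V₀₀₀+2V)/2V have dimensions 2t+p+m and m respectively.
(The subspaces of 𝔽₂ⁿ are realized as spans of the corresponding subsets,
which are already subspaces.) -/
theorem stmt_9 (n r s t p m : ℕ) (A : Matrix (Fin n) (Fin n) ℤ)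
    (hn : n = 2*r + 2*s + 2*t + p + m)
    (hA : ∀ i j : Fin n, A i j = nfEntry r s t p (i : ℕ) (j : ℕ)) :
    Module.finrank (ZMod 2) (Submodule.span (ZMod 2)
        {v : Fin n → ZMod 2 | (A.map (Int.cast : ℤ → ZMod 2)).mulVec v = 0}) = 2*t + p + m ∧
    Module.finrank (ZMod 2) (Submodule.span (ZMod 2)
        {v : Fin n → ZMod 2 | ∃ u : Fin n → ℤ, (∀ i, ((u i : ℤ) : ZMod 2) = v i) ∧
          ∀ w : Fin n → ℤ, ((u ⬝ᵥ A.mulVec w : ℤ) : ZMod 4) = 0}) = m := by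
  have hrs : 2*r+2*s ≤ n := by omega
  have hN2 : 2*r+2*s+2*t+p ≤ n := by omega
  -- value of mod-2 mulVec
  have hmv : ∀ (v : Fin n → ZMod 2) (i : Fin n),
      (A.map (Int.cast : ℤ → ZMod 2)).mulVec v i
        = ∑ j : Fin n, ((nfEntry r s t p (i : ℕ) (j : ℕ) : ℤ) : ZMod 2) * v j := by
    intro v i
    simp [Matrix.mulVec, dotProduct, Matrix.map_apply, hA]
  have hrow : ∀ (v : Fin n → ZMod 2) (i : Fin n) (hi : (i : ℕ) < 2*r+2*s),
      (A.map (Int.cast : ℤ → ZMod 2)).mulVec v i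
        = v ⟨partner (i : ℕ), lt_of_lt_of_le (partner_lt (by omega) hi) hrs⟩ := by
    intro v i hi
    rw [hmv]
    set pF : Fin n := ⟨partner (i : ℕ), lt_of_lt_of_le (partner_lt (by omega) hi) hrs⟩
    have h : ∀ j : Fin n, ((nfEntry r s t p (i : ℕ) (j : ℕ) : ℤ) : ZMod 2) * v j
        = if j = pF then v j else 0 := by
      intro j
      rw [entry2 r s t p _ _ hi]
      by_cases h : j = pF
      · rw [if_pos (show (j:ℕ) = partner (i:ℕ) by rw [h]), if_pos h, one_mul]
      · rw [if_neg (fun hc => h (Fin.ext hc)), if_neg h, zero_mul]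
    rw [Finset.sum_congr rfl fun j _ => h j,
      Finset.sum_ite_eq' Finset.univ pF v, if_pos (Finset.mem_univ pF)]
  -- first set equality
  have hs1 : {v : Fin n → ZMod 2 | (A.map (Int.cast : ℤ → ZMod 2)).mulVec v = 0}
      = ↑(coordZero n (2*r+2*s)) := by
    ext v
    simp only [Set.mem_setOf_eq, SetLike.mem_coe, mem_coordZero]
    constructor
    · intro hv i hi
      have hpi : partner (i : ℕ) < 2*r+2*s := partner_lt (by omega) hi
      have h2 := congrFun hv ⟨partner (i : ℕ), lt_of_lt_of_le hpi hrs⟩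
      rw [hrow v _ hpi] at h2
      have : (⟨partner (partner (i : ℕ)),
          lt_of_lt_of_le (partner_lt (by omega) hpi) hrs⟩ : Fin n) = i :=
        Fin.ext (partner_partner (i : ℕ))
      rwa [this] at h2
    · intro hv
      funext i
      by_cases hi : (i : ℕ) < 2*r+2*s
      · rw [hrow v i hi]
        exact hv _ (partner_lt (by omega) hi)
      · rw [hmv]
        simp only [Pi.zero_apply]
        exact Finset.sum_eq_zero fun j _ => by
          rw [entry2_zero r s t p _ _ (by omega), zero_mul]
  -- second set equality
  have hs2 : {v : Fin n → ZMod 2 | ∃ u : Fin n → ℤ, (∀ i, ((u i : ℤ) : ZMod 2) = v i) ∧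
      ∀ w : Fin n → ℤ, ((u ⬝ᵥ A.mulVec w : ℤ) : ZMod 4) = 0}
      = ↑(coordZero n (2*r+2*s+2*t+p)) := by
    ext v
    simp only [Set.mem_setOf_eq, SetLike.mem_coe, mem_coordZero]
    constructor
    · rintro ⟨u, hu, hw⟩ i hi
      -- column divisibility facts
      have Hcol : ∀ j : Fin n,
          (4 : ℤ) ∣ ∑ k : Fin n, u k * nfEntry r s t p (k : ℕ) (j : ℕ) := by
        intro j
        have h := hw (Pi.single j 1)
        rw [ZMod.intCast_zmod_eq_zero_iff_dvd] at h
        have hdp : u ⬝ᵥ A.mulVec (Pi.single j 1)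
            = ∑ k : Fin n, u k * nfEntry r s t p (k : ℕ) (j : ℕ) := by
          simp [Matrix.mulVec_single, dotProduct, hA]
        rwa [hdp] at h
      suffices h2 : (2 : ℤ) ∣ u i by
        rw [← hu i]
        rwa [ZMod.intCast_zmod_eq_zero_iff_dvd]
      rcases lt_or_ge (i : ℕ) (2*r) with h1 | h1
      · -- r block: use columns i and partner i
        have hpi : partner (i : ℕ) < 2*r := partner_lt (by omega) h1
        have hb : partner (i : ℕ) < n := by omega
        have e1 : (∑ k : Fin n, u k * nfEntry r s t p (k : ℕ) (i : ℕ))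
            = u i * 2 + u ⟨partner (i : ℕ), hb⟩ * 1 := by
          rw [Finset.sum_congr rfl fun k _ => by
            rw [nfEntry_symm, row1 r s t p _ _ h1]]
          exact sum_two_nat u i ⟨partner (i : ℕ), hb⟩ 2 1
        have e2 : (∑ k : Fin n, u k * nfEntry r s t p (k : ℕ) (partner (i : ℕ)))
            = u ⟨partner (i : ℕ), hb⟩ * 2 + u i * 1 := by
          rw [Finset.sum_congr rfl fun k _ => by
            rw [nfEntry_symm, row1 r s t p _ _ hpi]]
          simp only [partner_partner]
          exact sum_two_nat u ⟨partner (i : ℕ), hb⟩ i 2 1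
        have d1 := Hcol i
        have d2 := Hcol ⟨partner (i : ℕ), hb⟩
        rw [e1] at d1
        rw [show ((⟨partner (i : ℕ), hb⟩ : Fin n) : ℕ) = partner (i : ℕ) from rfl, e2] at d2
        omega
      · rcases lt_or_ge (i : ℕ) (2*r+2*s) with h2 | h2
        · -- s block: use column partner i
          have hpi1 : 2*r ≤ partner (i : ℕ) := partner_ge (by omega) h1
          have hpi2 : partner (i : ℕ) < 2*r+2*s := partner_lt (by omega) h2
          have hb : partner (i : ℕ) < n := by omega
          have e2 : (∑ k : Fin n, u k * nfEntry r s t p (k : ℕ) (partner (i : ℕ)))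
              = u i * 1 := by
            rw [Finset.sum_congr rfl fun k _ => by
              rw [nfEntry_symm, row2 r s t p _ _ hpi1 hpi2]]
            simp only [partner_partner]
            exact sum_single_nat u i 1
          have d2 := Hcol ⟨partner (i : ℕ), hb⟩
          rw [show ((⟨partner (i : ℕ), hb⟩ : Fin n) : ℕ) = partner (i : ℕ) from rfl, e2] at d2
          omega
        · rcases lt_or_ge (i : ℕ) (2*r+2*s+2*t) with h3 | h3
          · -- t block: use column partner i
            have hpi1 : 2*r+2*s ≤ partner (i : ℕ) := partner_ge (by omega) h2
            have hpi2 : partner (i : ℕ) < 2*r+2*s+2*t := partner_lt (by omega) h3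
            have hb : partner (i : ℕ) < n := by omega
            have e2 : (∑ k : Fin n, u k * nfEntry r s t p (k : ℕ) (partner (i : ℕ)))
                = u i * 2 := by
              rw [Finset.sum_congr rfl fun k _ => by
                rw [nfEntry_symm, row3 r s t p _ _ hpi1 hpi2]]
              simp only [partner_partner]
              exact sum_single_nat u i 2
            have d2 := Hcol ⟨partner (i : ℕ), hb⟩
            rw [show ((⟨partner (i : ℕ), hb⟩ : Fin n) : ℕ) = partner (i : ℕ) from rfl, e2] at d2
            omega
          · -- p block: use column i
            have e1 : (∑ k : Fin n, u k * nfEntry r s t p (k : ℕ) (i : ℕ))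
                = u i * 2 := by
              rw [Finset.sum_congr rfl fun k _ => by
                rw [nfEntry_symm, row4 r s t p _ _ h3 hi]]
              exact sum_single_nat u i 2
            have d1 := Hcol i
            rw [e1] at d1
            omega
    · intro hv
      refine ⟨fun i => ((v i).val : ℤ), fun i => ?_, fun w => ?_⟩
      · simp [ZMod.natCast_val, ZMod.cast_id]
      · have hz : (fun i => ((v i).val : ℤ)) ⬝ᵥ A.mulVec w = 0 := by
          simp only [dotProduct, Matrix.mulVec]
          apply Finset.sum_eq_zero
          intro k _
          by_cases hk : (k : ℕ) < 2*r+2*s+2*t+p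
          · have h0 : v k = 0 := hv k hk
            simp [h0]
          · have h0 : (∑ x : Fin n, A k x * w x) = 0 := by
              apply Finset.sum_eq_zero
              intro l _
              rw [hA, row5 r s t p _ _ (by omega), zero_mul]
            rw [h0, mul_zero]
        rw [hz]
        exact Int.cast_zero
  rw [hs1, hs2, Submodule.span_eq, Submodule.span_eq,
    finrank_coordZero n _ hrs, finrank_coordZero n _ hN2]
  omega
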